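/- For a finite commutative ring R, the nil clean graph G_N(R) is bipartite if and only if R is a field. -/

import Mathlib

def IsNilClean {R : Type*} [CommRing R] (r : R) : Prop :=
  ∃ n e : R, IsNilpotent n ∧ IsIdempotentElem e ∧ r = n + e

def nilCleanGraph (R : Type*) [CommRing R] : SimpleGraph R where
  Adj x y := x ≠ y ∧ IsNilClean (x + y)
  symm := ⟨by
    rintro x y ⟨hxy, n, e, hn, he, h⟩
    exact ⟨hxy.symm, n, e, hn, he, by rwa [add_comm]⟩⟩
  loopless := ⟨by rintro x ⟨h, -⟩; exact h rfl⟩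

/-!
If `R` is not a field it has a nonzero nonunit `a`, and finiteness makes some power `e = a ^ n`
(`n ≠ 0`) idempotent. Either `e = 0`, so `a` is nilpotent and `0, a, 1` is a triangle, or `e` is an
idempotent other than `0, 1`, and `0, e, 1 - e` is a triangle.

In a field `F` of characteristic `p`, `x` and `y` are adjacent iff `x ≠ y` and `x + y ∈ {0, 1}`.
Split `x = π x + w x` along an `𝔽_p`-linear retraction `π : F → 𝔽_p`. Along an edge `w y = -w x`
and `π x + π y ∈ {0, 1}`. So `x` can be coloured by the colour of `π x` in the graph of `𝔽_p`, the
path `0 - 1 - (-1) - 2 - (-2) - ⋯`, when `w x = -w x`, and otherwise by whether `w x` is the chosen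
element of the pair `{w x, -w x}`.
-/

open SimpleGraph

theorem exists_isIdempotentElem_pow {M : Type*} [Monoid M] [Finite M] (a : M) :
    ∃ n ≠ 0, IsIdempotentElem (a ^ n) := by
  obtain ⟨i, j, hij, h⟩ := Finite.exists_ne_map_eq_of_infinite fun k : ℕ => a ^ (k + 1)
  wlog hlt : i < j generalizing i j
  · exact this j i hij.symm h.symm (by omega)
  set m := i + 1
  set d := j - i
  have hd : d ≠ 0 := by omega
  have hperiod : ∀ k, a ^ m * (a ^ d) ^ k = a ^ m := by
    intro k
    induction k with
    | zero => rw [pow_zero, mul_one]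
    | succ k ih =>
      rw [pow_succ (a ^ d), ← mul_assoc, ih, ← pow_add]
      exact (show m + d = j + 1 by omega) ▸ h.symm
  have hsplit : a ^ (d * m) = a ^ (d * m - m) * a ^ m := by
    rw [← pow_add, Nat.sub_add_cancel (Nat.le_mul_of_pos_left m (Nat.pos_of_ne_zero hd))]
  refine ⟨d * m, Nat.mul_ne_zero hd (Nat.succ_ne_zero i), ?_⟩
  calc a ^ (d * m) * a ^ (d * m) = a ^ (d * m - m) * (a ^ m * (a ^ d) ^ m) := by
        rw [← pow_mul a d m, hsplit, mul_assoc]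
    _ = a ^ (d * m) := by rw [hperiod, ← hsplit]

theorem exists_isNilpotent_or_isIdempotentElem_of_not_isField {R : Type*} [CommRing R] [Finite R]
    [Nontrivial R] (hR : ¬IsField R) :
    (∃ a : R, a ≠ 0 ∧ IsNilpotent a) ∨ ∃ e : R, IsIdempotentElem e ∧ e ≠ 0 ∧ e ≠ 1 := by
  obtain ⟨a, ha0, ha⟩ : ∃ a : R, a ≠ 0 ∧ ¬IsUnit a := by
    by_contra! h
    exact hR ⟨exists_pair_ne R, mul_comm, fun ha => (h _ ha).exists_right_inv⟩
  obtain ⟨n, hn, he⟩ := exists_isIdempotentElem_pow a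
  by_cases h0 : a ^ n = 0
  · exact .inl ⟨a, ha0, n, h0⟩
  · exact .inr ⟨a ^ n, he, h0, fun h1 => ha (.of_pow_eq_one h1 hn)⟩

namespace IsNilClean

variable {R : Type*} [CommRing R]

theorem add {n e : R} (hn : IsNilpotent n) (he : IsIdempotentElem e) : IsNilClean (n + e) :=
  ⟨n, e, hn, he, rfl⟩

theorem of_isNilpotent {n : R} (hn : IsNilpotent n) : IsNilClean n := by
  simpa using add hn .zero

theorem of_isIdempotentElem {e : R} (he : IsIdempotentElem e) : IsNilClean e := by
  simpa using add .zero he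

theorem iff_eq_zero_or_one [IsDomain R] {r : R} : IsNilClean r ↔ r = 0 ∨ r = 1 := by
  constructor
  · rintro ⟨n, e, hn, he, rfl⟩
    rwa [hn.eq_zero, zero_add, ← IsIdempotentElem.iff_eq_zero_or_one]
  · rintro (rfl | rfl)
    exacts [of_isIdempotentElem .zero, of_isIdempotentElem .one]

end IsNilClean

theorem nilCleanGraph_adj_iff {R : Type*} [CommRing R] [IsDomain R] {x y : R} :
    (nilCleanGraph R).Adj x y ↔ x ≠ y ∧ (x + y = 0 ∨ x + y = 1) :=
  and_congr_right fun _ => IsNilClean.iff_eq_zero_or_one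

section Triangles

variable {R : Type*} [CommRing R] [DecidableEq R]

theorem isNClique_three_nilCleanGraph_of_isNilpotent [Nontrivial R] {a : R} (ha0 : a ≠ 0)
    (ha : IsNilpotent a) : (nilCleanGraph R).IsNClique 3 {0, a, 1} := by
  have ha1 : a ≠ 1 := by rintro rfl; exact not_isNilpotent_one ha
  rw [is3Clique_triple_iff]
  refine ⟨⟨ha0.symm, ?_⟩, ⟨zero_ne_one, ?_⟩, ⟨ha1, .add ha .one⟩⟩
  · simpa using IsNilClean.of_isNilpotent ha
  · simpa using IsNilClean.of_isIdempotentElem (IsIdempotentElem.one (M := R))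

theorem isNClique_three_nilCleanGraph_of_isIdempotentElem {e : R} (he : IsIdempotentElem e)
    (he0 : e ≠ 0) (he1 : e ≠ 1) : (nilCleanGraph R).IsNClique 3 {0, e, 1 - e} := by
  have hee : e ≠ 1 - e := by
    intro h
    have := he.one_sub_mul_self
    rw [← h, he.eq] at this
    exact he0 this
  rw [is3Clique_triple_iff]
  refine ⟨⟨he0.symm, ?_⟩, ⟨fun h => he1 (by linear_combination h), ?_⟩, ⟨hee, ?_⟩⟩
  · simpa using IsNilClean.of_isIdempotentElem he
  · simpa using IsNilClean.of_isIdempotentElem he.one_sub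
  · simpa using IsNilClean.of_isIdempotentElem (IsIdempotentElem.one (M := R))

end Triangles

theorem not_cliqueFree_three_nilCleanGraph {R : Type*} [CommRing R] [Finite R] [Nontrivial R]
    (hR : ¬IsField R) : ¬(nilCleanGraph R).CliqueFree 3 := by
  classical
  rcases exists_isNilpotent_or_isIdempotentElem_of_not_isField hR with
    ⟨a, ha0, ha⟩ | ⟨e, he, he0, he1⟩
  exacts [fun h => h _ (isNClique_three_nilCleanGraph_of_isNilpotent ha0 ha),
    fun h => h _ (isNClique_three_nilCleanGraph_of_isIdempotentElem he he0 he1)]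

theorem colorable_two_nilCleanGraph_zmod (p : ℕ) [Fact p.Prime] :
    (nilCleanGraph (ZMod p)).Colorable 2 := by
  have hp := (Fact.out : p.Prime).two_le
  -- `k` and `-k` sit at positions `2k - 1` and `2k` of the path `0 - 1 - (-1) - 2 - (-2) - ⋯`.
  refine Fintype.card_bool ▸ (Coloring.mk (fun a : ZMod p => decide (a ≠ 0 ∧ 2 * a.val ≤ p))
    fun {a b} hab => ?_).colorable
  obtain ⟨hne, hsum⟩ := nilCleanGraph_adj_iff.1 hab
  have hval : a.val ≠ b.val := fun h => hne (ZMod.val_injective p h)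
  have ha := ZMod.val_lt a
  have hb := ZMod.val_lt b
  have hsum' : (a + b).val = 0 ∨ (a + b).val = 1 := by
    rcases hsum with h | h <;> simp [h, ZMod.val_one]
  simp only [ne_eq, ← ZMod.val_eq_zero, decide_eq_decide]
  rcases lt_or_ge (a.val + b.val) p with hlt | hge
  · rw [ZMod.val_add_of_lt hlt] at hsum'
    omega
  · have := ZMod.val_add_val_of_le hge
    omega

theorem colorable_two_nilCleanGraph_of_retraction {K F : Type*} [CommRing K] [IsDomain K]
    [CommRing F] [IsDomain F] [Algebra K F] (π : F →ₗ[K] K) (hπ : π 1 = 1)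
    (hK : (nilCleanGraph K).Colorable 2) : (nilCleanGraph F).Colorable 2 := by
  obtain ⟨cK⟩ := hK
  let : LinearOrder F := IsWellOrder.linearOrder WellOrderingRel
  set w : F → F := fun x => x - algebraMap K F (π x) with hw
  refine ⟨Coloring.mk (fun x => if w x = -w x then cK (π x) else if w x < -w x then 0 else 1)
    fun {x y} hxy => ?_⟩
  obtain ⟨hne, hsum⟩ := nilCleanGraph_adj_iff.1 hxy
  have hπsum : algebraMap K F (π x + π y) = x + y := by
    rcases hsum with h | h <;> simp [← map_add, h, hπ]
  have hwy : w y = -w x := by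
    simp only [hw]
    rw [map_add] at hπsum
    linear_combination -hπsum
  by_cases h0 : w x = -w x
  · have h0y : w y = -w y := by rw [hwy, neg_neg]; exact h0.symm
    rw [if_pos h0, if_pos h0y]
    refine cK.valid (nilCleanGraph_adj_iff.2 ⟨fun hπxy => hne ?_, ?_⟩)
    · have hwxy : w x = w y := by rw [hwy]; exact h0
      simp only [hw, hπxy] at hwxy
      linear_combination hwxy
    · rcases hsum with h | h
      · exact .inl (by rw [← map_add, h, map_zero])
      · exact .inr (by rw [← map_add, h, hπ])
  · have h0y : ¬w y = -w y := by rw [hwy, neg_neg]; exact Ne.symm h0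
    rw [if_neg h0, if_neg h0y, hwy, neg_neg]
    split_ifs with hlt hgt hgt
    · exact absurd hgt (lt_asymm hlt)
    · exact Fin.zero_ne_one
    · exact Fin.zero_ne_one.symm
    · exact absurd (le_antisymm (not_lt.1 hgt) (not_lt.1 hlt)) h0

theorem colorable_two_nilCleanGraph_of_charP (F : Type*) [Field F] (p : ℕ) [Fact p.Prime]
    [CharP F p] : (nilCleanGraph F).Colorable 2 := by
  let := ZMod.algebra F p
  obtain ⟨π, hπ⟩ := (Algebra.linearMap (ZMod p) F).exists_leftInverse_of_injective
    (LinearMap.ker_eq_bot.2 (algebraMap (ZMod p) F).injective)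
  exact colorable_two_nilCleanGraph_of_retraction π (by simpa using LinearMap.congr_fun hπ 1)
    (colorable_two_nilCleanGraph_zmod p)

theorem stmt11 (R : Type*) [CommRing R] [Fintype R] [Nontrivial R] :
    (nilCleanGraph R).Colorable 2 ↔ IsField R := by
  refine ⟨fun hcol => by_contra fun hR =>
    not_cliqueFree_three_nilCleanGraph hR (hcol.cliqueFree (by norm_num)), fun hR => ?_⟩
  let := hR.toField
  obtain ⟨p, _⟩ := CharP.exists R
  have : Fact p.Prime := ⟨CharP.char_is_prime R p⟩
  exact colorable_two_nilCleanGraph_of_charP R p
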